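/- Let 1 ≤ p ≤ ∞, let P be a polynomial in one variable with complex coefficients, let T = P(d/dt) with domain D = C^∞(𝕋) viewed as an operator on L^p(𝕋), and let T_e be any admissible extension of T on L^p(𝕋). Then T_e has the single-valued extension property. -/

import Mathlib

open Filter MeasureTheory
open scoped ENNReal Topology

noncomputable section

/-- The normalised measure `(1/2π) dt` on `(0, 2π]ᶜ`-representatives, i.e. the Haar probability
measure of the 1-torus `𝕋 = ℝ/2πℤ`, realised on `ℝ` : `(1/(2π)) · (Lebesgue restricted to
`(0, 2π]`)`. -/
def torusMeasure : Measure ℝ :=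
  (ENNReal.ofReal (2 * Real.pi))⁻¹ • (volume.restrict (Set.Ioc 0 (2 * Real.pi)))

/-- `f : ℝ → ℂ` represents an element of `C^∞(𝕋)`: it is infinitely differentiable and
`2π`-periodic. -/
def SmoothTorusFn (f : ℝ → ℂ) : Prop :=
  (∀ n : ℕ, ContDiff ℝ n f) ∧ Function.Periodic f (2 * Real.pi)

/-- The constant coefficient differential operator `P(d/dt)` applied to `f`. -/
def polyDiffOp (P : Polynomial ℂ) (f : ℝ → ℂ) : ℝ → ℂ := fun t =>
  ∑ k ∈ Finset.range (P.natDegree + 1), P.coeff k * iteratedDeriv k f t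

/-- `T_e` is an admissible extension on `L^p(𝕋)` of `T = P(d/dt)` with domain `C^∞(𝕋)`:
its domain contains (the classes of) all smooth `2π`-periodic functions, on which it is given
by `P(d/dt)`, and every `u` in its domain satisfies the distributional identity
`∫ (T_e u) g = ∫ u (P(-d/dt) g)` for all smooth `2π`-periodic `g`, i.e. `T_e u` is the
distributional image of `u` under `P(d/dt)`. -/
def IsAdmissibleTorusExt (p : ℝ≥0∞) [Fact (1 ≤ p)] (P : Polynomial ℂ)
    (Te : Lp ℂ p torusMeasure →ₗ.[ℂ] Lp ℂ p torusMeasure) : Prop :=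
  (∀ f : ℝ → ℂ, SmoothTorusFn f → ∀ u : Lp ℂ p torusMeasure, ⇑u =ᵐ[torusMeasure] f →
    ∃ hu : u ∈ Te.domain, ⇑(Te ⟨u, hu⟩) =ᵐ[torusMeasure] polyDiffOp P f) ∧
  (∀ u : Te.domain, ∀ g : ℝ → ℂ, SmoothTorusFn g →
    ∫ t, (Te u : Lp ℂ p torusMeasure) t * g t ∂torusMeasure =
      ∫ t, (u : Lp ℂ p torusMeasure) t * polyDiffOp (P.comp (-Polynomial.X)) g t ∂torusMeasure)

/-- A partially defined operator `T` on `X` has the single-valued extension property if for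
every nonempty open `U ⊆ ℂ`, the only analytic `φ : U → X` with values in the domain of `T`
such that `(T - z) φ z = 0` on `U` is the zero function. -/
def HasSVEP {X : Type*} [NormedAddCommGroup X] [NormedSpace ℂ X] (T : X →ₗ.[ℂ] X) : Prop :=
  ∀ U : Set ℂ, IsOpen U → U.Nonempty → ∀ φ : ℂ → X, AnalyticOnNhd ℂ φ U →
    (∀ z ∈ U, ∃ hz : φ z ∈ T.domain, T ⟨φ z, hz⟩ - z • φ z = 0) →
    ∀ z ∈ U, φ z = 0

instance : Fact (0 < 2 * Real.pi) := ⟨Real.two_pi_pos⟩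

instance : IsProbabilityMeasure torusMeasure := by
  constructor
  simp only [torusMeasure, Measure.smul_apply, Measure.restrict_apply MeasurableSet.univ,
    Set.univ_inter, Real.volume_Ioc, smul_eq_mul]
  rw [sub_zero, ENNReal.inv_mul_cancel ((ENNReal.ofReal_pos.mpr Real.two_pi_pos).ne')
    ENNReal.ofReal_ne_top]

lemma lp_integrable {p : ℝ≥0∞} [Fact (1 ≤ p)] (u : Lp ℂ p torusMeasure) :
    Integrable (⇑u) torusMeasure :=
  (Lp.memLp u).integrable Fact.out

/-- fourier exponential -/
def en (n : ℤ) : ℝ → ℂ := fun t => Complex.exp (Complex.I * n * t)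

lemma en_norm (n : ℤ) (t : ℝ) : ‖en n t‖ = 1 := by
  simp [en, Complex.norm_exp]

lemma en_smooth (n : ℤ) : ∀ k : ℕ, ContDiff ℝ k (en n) := by
  intro k
  have h1 : ContDiff ℝ (⊤ : ℕ∞) (fun t : ℝ => Complex.I * n * t) :=
    contDiff_const.mul Complex.ofRealCLM.contDiff
  exact (Complex.contDiff_exp.comp h1).of_le (mod_cast le_top)

lemma en_periodic (n : ℤ) : Function.Periodic (en n) (2 * Real.pi) := by
  intro t
  have : Complex.I * n * ((t : ℝ) + 2 * Real.pi : ℝ) =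
      Complex.I * n * t + n * (2 * Real.pi * Complex.I) := by push_cast; ring
  rw [en, this, Complex.exp_add, Complex.exp_int_mul_two_pi_mul_I, mul_one]; rfl

lemma iteratedDeriv_cexp_real (c : ℂ) (k : ℕ) :
    iteratedDeriv k (fun t : ℝ => Complex.exp (c * t)) = fun t : ℝ => c ^ k * Complex.exp (c * t) := by
  induction k with
  | zero => simp
  | succ k ih =>
    rw [iteratedDeriv_succ, ih]
    funext t
    have h1 : HasDerivAt (fun t : ℝ => Complex.exp (c * t)) (Complex.exp (c * t) * c) t := by
      have := ((Complex.hasDerivAt_exp (c * t)).comp (t : ℂ)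
        ((hasDerivAt_id (t : ℂ)).const_mul c)).comp_ofReal
      simpa [mul_comm] using this
    have h2 : HasDerivAt (fun t : ℝ => c ^ k * Complex.exp (c * t))
        (c ^ k * (Complex.exp (c * t) * c)) t := h1.const_mul _
    rw [h2.deriv]; ring

lemma polyDiffOp_en (R : Polynomial ℂ) (n : ℤ) (t : ℝ) :
    polyDiffOp R (en n) t = R.eval (Complex.I * n) * en n t := by
  have he : en n = fun t : ℝ => Complex.exp ((Complex.I * n) * t) := rfl
  rw [polyDiffOp, Polynomial.eval_eq_sum_range, Finset.sum_mul]
  refine Finset.sum_congr rfl fun k _ => ?_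
  rw [he, iteratedDeriv_cexp_real]
  ring

/-- Pairing with a bounded continuous function, as a CLM on Lp. -/
lemma integrable_mul_bdd {p : ℝ≥0∞} [Fact (1 ≤ p)] (u : Lp ℂ p torusMeasure)
    {g : ℝ → ℂ} (hg : Continuous g) {C : ℝ} (hC : ∀ t, ‖g t‖ ≤ C) :
    Integrable (fun t => u t * g t) torusMeasure := by
  have := (lp_integrable u).bdd_mul hg.aestronglyMeasurable (Eventually.of_forall hC)
  simpa [mul_comm] using this

lemma integral_norm_le_norm {p : ℝ≥0∞} [Fact (1 ≤ p)] (u : Lp ℂ p torusMeasure) :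
    ∫ t, ‖u t‖ ∂torusMeasure ≤ ‖u‖ := by
  rw [Lp.norm_def, integral_norm_eq_lintegral_enorm (Lp.aestronglyMeasurable u)]
  have h1 : eLpNorm (⇑u) 1 torusMeasure ≤ eLpNorm (⇑u) p torusMeasure :=
    eLpNorm_le_eLpNorm_of_exponent_le Fact.out (Lp.aestronglyMeasurable u)
  rw [eLpNorm_one_eq_lintegral_enorm] at h1
  exact ENNReal.toReal_mono (Lp.eLpNorm_ne_top u) h1

lemma norm_integral_pair_le {p : ℝ≥0∞} [Fact (1 ≤ p)] (u : Lp ℂ p torusMeasure)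
    {g : ℝ → ℂ} (hg : Continuous g) {C : ℝ} (hC : ∀ t, ‖g t‖ ≤ C) :
    ‖∫ t, u t * g t ∂torusMeasure‖ ≤ C * ‖u‖ := by
  have hC0 : 0 ≤ C := le_trans (norm_nonneg _) (hC 0)
  have h1 : ‖∫ t, u t * g t ∂torusMeasure‖ ≤ ∫ t, C * ‖u t‖ ∂torusMeasure := by
    refine (norm_integral_le_integral_norm _).trans ?_
    refine integral_mono (integrable_mul_bdd u hg hC).norm
      ((lp_integrable u).norm.const_mul C) fun t => ?_
    rw [norm_mul]
    calc ‖u t‖ * ‖g t‖ ≤ ‖u t‖ * C := by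
          exact mul_le_mul_of_nonneg_left (hC t) (norm_nonneg _)
      _ = C * ‖u t‖ := mul_comm _ _
  rw [integral_const_mul] at h1
  exact h1.trans (mul_le_mul_of_nonneg_left (integral_norm_le_norm u) hC0)

/-- The pairing functional `u ↦ ∫ u g` as a continuous linear map on `Lp`. -/
def pairCLM (p : ℝ≥0∞) [Fact (1 ≤ p)] (g : ℝ → ℂ) (hg : Continuous g) (C : ℝ)
    (hC : ∀ t, ‖g t‖ ≤ C) : Lp ℂ p torusMeasure →L[ℂ] ℂ :=
  LinearMap.mkContinuous
    { toFun := fun u => ∫ t, u t * g t ∂torusMeasure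
      map_add' := fun u v => by
        rw [← integral_add (integrable_mul_bdd u hg hC) (integrable_mul_bdd v hg hC)]
        refine integral_congr_ae ?_
        filter_upwards [Lp.coeFn_add u v] with t ht
        rw [ht]; simp [add_mul]
      map_smul' := fun c u => by
        rw [← integral_smul]
        refine integral_congr_ae ?_
        filter_upwards [Lp.coeFn_smul c u] with t ht
        rw [ht]; simp [mul_assoc] }
    C (fun u => norm_integral_pair_le u hg hC)

lemma pairCLM_apply {p : ℝ≥0∞} [Fact (1 ≤ p)] {g : ℝ → ℂ} {hg : Continuous g} {C : ℝ}
    {hC : ∀ t, ‖g t‖ ≤ C} (u : Lp ℂ p torusMeasure) :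
    pairCLM p g hg C hC u = ∫ t, u t * g t ∂torusMeasure := rfl

-- Step A: pairing vanishes against all continuous functions on the circle
lemma pair_continuous_eq_zero {p : ℝ≥0∞} [Fact (1 ≤ p)] (u : Lp ℂ p torusMeasure)
    (h : ∀ n : ℤ, ∫ t, u t * Complex.exp (Complex.I * n * t) ∂torusMeasure = 0)
    (g : C(AddCircle (2 * Real.pi), ℂ)) :
    ∫ t, u t * g (t : AddCircle (2 * Real.pi)) ∂torusMeasure = 0 := by
  have hInt : ∀ g : C(AddCircle (2 * Real.pi), ℂ),
      Integrable (fun t => u t * g (t : AddCircle (2 * Real.pi))) torusMeasure := fun g =>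
    integrable_mul_bdd u (g.continuous.comp (AddCircle.continuous_mk' (2 * Real.pi)))
      (fun t => g.norm_coe_le_norm _)
  set Φ : C(AddCircle (2 * Real.pi), ℂ) →ₗ[ℂ] ℂ :=
    { toFun := fun g => ∫ t, u t * g (t : AddCircle (2 * Real.pi)) ∂torusMeasure
      map_add' := fun g₁ g₂ => by
        rw [← integral_add (hInt g₁) (hInt g₂)]
        refine integral_congr_ae (Eventually.of_forall fun t => ?_)
        simp [mul_add]
      map_smul' := fun c g => by
        rw [← integral_smul]
        refine integral_congr_ae (Eventually.of_forall fun t => ?_)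
        simp; ring } with hΦ
  have hbound : ∀ g : C(AddCircle (2 * Real.pi), ℂ),
      ‖Φ g‖ ≤ (∫ t, ‖u t‖ ∂torusMeasure) * ‖g‖ := by
    intro g
    refine (norm_integral_le_integral_norm _).trans ?_
    rw [← integral_mul_const]
    refine integral_mono (hInt g).norm ((lp_integrable u).norm.mul_const _) fun t => ?_
    rw [norm_mul]
    exact mul_le_mul_of_nonneg_left (g.norm_coe_le_norm _) (norm_nonneg _)
  set Φ' : C(AddCircle (2 * Real.pi), ℂ) →L[ℂ] ℂ := Φ.mkContinuous _ hbound with hΦ'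
  have hfour : ∀ n : ℤ, Φ' (fourier n) = 0 := by
    intro n
    rw [← h n]
    refine integral_congr_ae (Eventually.of_forall fun t => ?_)
    dsimp only
    congr 1
    rw [fourier_coe_apply]
    congr 1
    have h2 : (2 * Real.pi : ℂ) ≠ 0 := by
      simpa using Real.two_pi_pos.ne'
    push_cast
    field_simp
  have hker : (Submodule.span ℂ (Set.range (@fourier (2 * Real.pi)))).topologicalClosure ≤
      Φ'.ker := by
    refine Submodule.topologicalClosure_minimal _ ?_ (ContinuousLinearMap.isClosed_ker Φ')
    rw [Submodule.span_le]
    rintro - ⟨n, rfl⟩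
    exact hfour n
  rw [span_fourier_closure_eq_top] at hker
  exact hker (Submodule.mem_top : g ∈ ⊤)


-- Step B
lemma setIntegral_zero_of_compact_subset {p : ℝ≥0∞} [Fact (1 ≤ p)] (u : Lp ℂ p torusMeasure)
    (h : ∀ g : C(AddCircle (2 * Real.pi), ℂ),
      ∫ t, u t * g (t : AddCircle (2 * Real.pi)) ∂torusMeasure = 0)
    (K : Set ℝ) (hK : IsCompact K) (hKsub : K ⊆ Set.Ioc 0 (2 * Real.pi)) :
    ∫ t in K, u t ∂torusMeasure = 0 := by
  rcases K.eq_empty_or_nonempty with rfl | hne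
  · simp
  set C : Set (AddCircle (2 * Real.pi)) := ((↑) : ℝ → AddCircle (2 * Real.pi)) '' K with hC
  have hCcl : IsClosed C := (hK.image (AddCircle.continuous_mk' _)).isClosed
  have hCne : C.Nonempty := hne.image _
  set S : Set ℝ := ((↑) : ℝ → AddCircle (2 * Real.pi)) ⁻¹' C with hS
  have hSmeas : MeasurableSet S := (hCcl.preimage (AddCircle.continuous_mk' _)).measurableSet
  set g : ℕ → C(AddCircle (2 * Real.pi), ℂ) := fun m =>
    ⟨fun y => ((max 0 (1 - m * Metric.infDist y C) : ℝ) : ℂ),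
     Complex.continuous_ofReal.comp (continuous_const.max (continuous_const.sub
       (continuous_const.mul (Metric.continuous_infDist_pt C))))⟩ with hg
  have hg1 : ∀ (m : ℕ) (y : AddCircle (2 * Real.pi)), ‖(g m) y‖ ≤ 1 := by
    intro m y
    have h0 : (0:ℝ) ≤ m * Metric.infDist y C :=
      mul_nonneg (Nat.cast_nonneg m) Metric.infDist_nonneg
    have h2 : (0:ℝ) ≤ max 0 (1 - m * Metric.infDist y C) := le_max_left 0 _
    simp only [hg, ContinuousMap.coe_mk, Complex.norm_real, Real.norm_eq_abs,
      abs_of_nonneg h2]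
    exact max_le zero_le_one (by linarith)
  have hDCT : Tendsto (fun m : ℕ => ∫ t, u t * (g m) (t : AddCircle (2 * Real.pi)) ∂torusMeasure)
      atTop (𝓝 (∫ t, S.indicator (⇑u) t ∂torusMeasure)) := by
    refine tendsto_integral_of_dominated_convergence (fun t => ‖u t‖)
      (fun m => (Lp.aestronglyMeasurable u).mul
        (((g m).continuous.comp (AddCircle.continuous_mk' _)).aestronglyMeasurable))
      (lp_integrable u).norm
      (fun m => Eventually.of_forall fun t => ?_) (Eventually.of_forall fun t => ?_)
    · rw [norm_mul]
      calc ‖u t‖ * ‖(g m) ↑t‖ ≤ ‖u t‖ * 1 :=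
            mul_le_mul_of_nonneg_left (hg1 m _) (norm_nonneg _)
        _ = ‖u t‖ := mul_one _
    · by_cases htS : t ∈ S
      · have hd : Metric.infDist ((t : ℝ) : AddCircle (2 * Real.pi)) C = 0 :=
          Metric.infDist_zero_of_mem htS
        rw [Set.indicator_of_mem htS]
        have he : ∀ m : ℕ, u t * (g m) (t : AddCircle (2 * Real.pi)) = u t := by
          intro m
          simp only [hg, ContinuousMap.coe_mk, hd, mul_zero, sub_zero]
          norm_num
        rw [tendsto_congr he]
        exact tendsto_const_nhds
      · have hd : 0 < Metric.infDist ((t : ℝ) : AddCircle (2 * Real.pi)) C :=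
          (hCcl.notMem_iff_infDist_pos hCne).mp htS
        rw [Set.indicator_of_notMem htS]
        have he : (fun m : ℕ => u t * (g m) (t : AddCircle (2 * Real.pi)))
            =ᶠ[atTop] fun _ => 0 := by
          filter_upwards [eventually_ge_atTop
            ⌈1 / Metric.infDist ((t : ℝ) : AddCircle (2 * Real.pi)) C⌉₊] with m hm
          have h1 : 1 / Metric.infDist ((t : ℝ) : AddCircle (2 * Real.pi)) C ≤ (m : ℝ) :=
            le_trans (Nat.le_ceil _) (Nat.cast_le.mpr hm)
          have h2 : (1:ℝ) ≤ m * Metric.infDist ((t : ℝ) : AddCircle (2 * Real.pi)) C :=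
            (div_le_iff₀ hd).mp h1
          have h3 : max 0 (1 - (m:ℝ) * Metric.infDist ((t : ℝ) : AddCircle (2 * Real.pi)) C)
              = 0 := max_eq_left (by linarith)
          simp only [hg, ContinuousMap.coe_mk, h3, Complex.ofReal_zero, mul_zero]
        rw [tendsto_congr' he]
        exact tendsto_const_nhds
  have hzero : ∫ t, S.indicator (⇑u) t ∂torusMeasure = 0 := by
    have : (fun m : ℕ => ∫ t, u t * (g m) (t : AddCircle (2 * Real.pi)) ∂torusMeasure)
        = fun _ => 0 := funext fun m => h (g m)
    rw [this] at hDCT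
    exact tendsto_nhds_unique hDCT tendsto_const_nhds
  rw [integral_indicator hSmeas] at hzero
  -- transfer from S to K
  have hSK : S ∩ Set.Ioc 0 (2 * Real.pi) = K := by
    ext x
    constructor
    · rintro ⟨hxS, hxI⟩
      obtain ⟨k, hkK, hk⟩ := hxS
      have hkI : k ∈ Set.Ioc 0 (0 + 2 * Real.pi) := by rw [zero_add]; exact hKsub hkK
      have hxI' : x ∈ Set.Ioc 0 (0 + 2 * Real.pi) := by rwa [zero_add]
      have e1 : AddCircle.liftIoc (2 * Real.pi) 0 id ((k : ℝ) : AddCircle (2 * Real.pi)) = k :=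
        AddCircle.liftIoc_coe_apply hkI
      have e2 : AddCircle.liftIoc (2 * Real.pi) 0 id ((x : ℝ) : AddCircle (2 * Real.pi)) = x :=
        AddCircle.liftIoc_coe_apply hxI'
      rw [hk] at e1
      rw [e1] at e2
      rwa [← e2]
    · intro hxK
      exact ⟨Set.mem_image_of_mem _ hxK, hKsub hxK⟩
  have hres : torusMeasure.restrict S = torusMeasure.restrict K := by
    have hKm : MeasurableSet K := hK.isClosed.measurableSet
    rw [torusMeasure, Measure.restrict_smul, Measure.restrict_smul,
      Measure.restrict_restrict hSmeas, Measure.restrict_restrict hKm, hSK,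
      Set.inter_eq_left.mpr hKsub]
  rw [← hres]
  exact hzero

-- Step C
lemma setIntegral_zero_all_compact {p : ℝ≥0∞} [Fact (1 ≤ p)] (u : Lp ℂ p torusMeasure)
    (h : ∀ g : C(AddCircle (2 * Real.pi), ℂ),
      ∫ t, u t * g (t : AddCircle (2 * Real.pi)) ∂torusMeasure = 0)
    (K : Set ℝ) (hK : IsCompact K) :
    ∫ t in K, u t ∂torusMeasure = 0 := by
  have hKm : MeasurableSet K := hK.isClosed.measurableSet
  set s : ℕ → Set ℝ := fun n => K ∩ Set.Icc (1 / ((n : ℝ) + 1)) (2 * Real.pi) with hs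
  have hsub : ∀ n, s n ⊆ Set.Ioc 0 (2 * Real.pi) := by
    rintro n x ⟨-, h1, h2⟩
    exact ⟨lt_of_lt_of_le (by positivity) h1, h2⟩
  have hmeas : ∀ n, MeasurableSet (s n) := fun n => hKm.inter measurableSet_Icc
  have hmono : Monotone s := by
    rintro a b hab x ⟨hxK, h1, h2⟩
    refine ⟨hxK, le_trans ?_ h1, h2⟩
    apply one_div_le_one_div_of_le (by positivity)
    exact add_le_add_left (Nat.cast_le.mpr hab) 1
  have hunion : ⋃ n, s n = K ∩ Set.Ioc 0 (2 * Real.pi) := by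
    ext x
    simp only [hs, Set.mem_iUnion, Set.mem_inter_iff, Set.mem_Icc, Set.mem_Ioc]
    constructor
    · rintro ⟨n, hxK, h1, h2⟩
      exact ⟨hxK, lt_of_lt_of_le (by positivity) h1, h2⟩
    · rintro ⟨hxK, h1, h2⟩
      obtain ⟨n, hn⟩ := exists_nat_one_div_lt h1
      exact ⟨n, hxK, hn.le, h2⟩
  have htend := tendsto_setIntegral_of_monotone hmeas hmono
    ((lp_integrable u).integrableOn (s := ⋃ n, s n))
  have hzero : ∀ n, ∫ t in s n, u t ∂torusMeasure = 0 := fun n =>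
    setIntegral_zero_of_compact_subset u h (s n) (hK.inter_right isClosed_Icc) (hsub n)
  rw [funext hzero] at htend
  have hlim : ∫ t in ⋃ n, s n, u t ∂torusMeasure = 0 :=
    tendsto_nhds_unique htend tendsto_const_nhds
  rw [hunion] at hlim
  have hres : torusMeasure.restrict K = torusMeasure.restrict (K ∩ Set.Ioc 0 (2 * Real.pi)) := by
    rw [torusMeasure, Measure.restrict_smul, Measure.restrict_smul,
      Measure.restrict_restrict hKm, Measure.restrict_restrict (hKm.inter measurableSet_Ioc),
      Set.inter_assoc, Set.inter_self]
  rw [hres]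
  exact hlim

-- Step D : uniqueness
lemma torus_fourier_unique {p : ℝ≥0∞} [Fact (1 ≤ p)] (u : Lp ℂ p torusMeasure)
    (h : ∀ n : ℤ, ∫ t, u t * Complex.exp (Complex.I * n * t) ∂torusMeasure = 0) : u = 0 := by
  rw [Lp.eq_zero_iff_ae_eq_zero]
  exact ae_eq_zero_of_forall_setIntegral_isCompact_eq_zero (lp_integrable u)
    (fun K hK => setIntegral_zero_all_compact u (pair_continuous_eq_zero u h) K hK)

/-- Let `1 ≤ p ≤ ∞`, let `P ∈ ℂ[X]`, let `T = P(d/dt)` with domain `C^∞(𝕋)` viewed as an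
operator on `L^p(𝕋)`, and let `T_e` be any admissible extension of `T` on `L^p(𝕋)`. Then `T_e`
has the single-valued extension property. -/
theorem stmt7 (p : ℝ≥0∞) [Fact (1 ≤ p)] (P : Polynomial ℂ)
    (Te : Lp ℂ p torusMeasure →ₗ.[ℂ] Lp ℂ p torusMeasure)
    (hTe : IsAdmissibleTorusExt p P Te) :
    HasSVEP Te := by
  intro U hU hUne φ hφ hsol z hzU
  apply torus_fourier_unique
  intro n
  have hgc : Continuous (en n) := (en_smooth n 0).continuous
  set Ψ : Lp ℂ p torusMeasure →L[ℂ] ℂ :=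
    pairCLM p (en n) hgc 1 (fun t => le_of_eq (en_norm n t)) with hΨ
  set c : ℂ → ℂ := fun w => Ψ (φ w) with hc
  set q : ℂ := Polynomial.eval (-(Complex.I * n)) P with hq
  have hcw : ∀ v : ℂ, c v = ∫ t, (φ v) t * en n t ∂torusMeasure := fun v =>
    pairCLM_apply (φ v)
  have h1 : ∀ w ∈ U, w ≠ q → c w = 0 := by
    intro w hwU hwq
    obtain ⟨hdom, heq⟩ := hsol w hwU
    have heq' : Te ⟨φ w, hdom⟩ = w • φ w := sub_eq_zero.mp heq
    have h2 := hTe.2 ⟨φ w, hdom⟩ (en n) ⟨en_smooth n, en_periodic n⟩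
    have hL : ∫ t, (Te ⟨φ w, hdom⟩ : Lp ℂ p torusMeasure) t * en n t ∂torusMeasure
        = w * c w := by
      rw [heq']
      calc ∫ t, (w • φ w : Lp ℂ p torusMeasure) t * en n t ∂torusMeasure
          = ∫ t, w * ((φ w) t * en n t) ∂torusMeasure := by
            refine integral_congr_ae ?_
            filter_upwards [Lp.coeFn_smul w (φ w)] with t ht
            rw [ht]; simp only [Pi.smul_apply, smul_eq_mul]; ring
        _ = w * ∫ t, (φ w) t * en n t ∂torusMeasure := integral_const_mul _ _
        _ = w * c w := by rw [hcw w]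
    have hR : ∫ t, (φ w : Lp ℂ p torusMeasure) t *
          polyDiffOp (P.comp (-Polynomial.X)) (en n) t ∂torusMeasure = q * c w := by
      have hpt : ∀ t : ℝ, polyDiffOp (P.comp (-Polynomial.X)) (en n) t = q * en n t := by
        intro t
        rw [polyDiffOp_en]
        congr 1
        rw [hq, Polynomial.eval_comp]
        simp
      calc ∫ t, (φ w : Lp ℂ p torusMeasure) t *
            polyDiffOp (P.comp (-Polynomial.X)) (en n) t ∂torusMeasure
          = ∫ t, q * ((φ w) t * en n t) ∂torusMeasure := by
            refine integral_congr_ae (Eventually.of_forall fun t => ?_)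
            dsimp only
            rw [hpt]; ring
        _ = q * ∫ t, (φ w) t * en n t ∂torusMeasure := integral_const_mul _ _
        _ = q * c w := by rw [hcw w]
    rw [hL, hR] at h2
    have h3 : (w - q) * c w = 0 := by rw [sub_mul, h2]; ring
    rcases mul_eq_zero.mp h3 with h4 | h4
    · exact absurd (sub_eq_zero.mp h4) hwq
    · exact h4
  have hcont : ContinuousAt c z := Ψ.continuous.continuousAt.comp (hφ z hzU).continuousAt
  have hcz : c z = 0 := by
    by_cases hzq : z = q
    · have hdense : z ∈ closure (U ∩ ({q}ᶜ : Set ℂ)) :=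
        (dense_compl_singleton q).open_subset_closure_inter hU hzU
      have hne2 : (𝓝[U ∩ ({q}ᶜ : Set ℂ)] z).NeBot :=
        mem_closure_iff_nhdsWithin_neBot.mp hdense
      have t1 : Tendsto c (𝓝[U ∩ ({q}ᶜ : Set ℂ)] z) (𝓝 (c z)) :=
        hcont.tendsto.mono_left nhdsWithin_le_nhds
      have t2 : Tendsto c (𝓝[U ∩ ({q}ᶜ : Set ℂ)] z) (𝓝 0) := by
        refine Tendsto.congr' ?_ tendsto_const_nhds
        filter_upwards [self_mem_nhdsWithin] with w hw using (h1 w hw.1 hw.2).symm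
      exact tendsto_nhds_unique t1 t2
    · exact h1 z hzU hzq
  rw [hcw z] at hcz
  exact hcz
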